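/- For the finite-horizon stochastic control problem minimizing E[ε Σ_{t=0}^{T-1} u_t² + x_T²] subject to x_{t+1} = x_t + u_t + w_{t+1}, the optimal feedback strategy is γ_t*(x) = -x/(T - t + ε). -/

import Mathlib

open MeasureTheory ProbabilityTheory

/-- The state trajectory generated by the dynamics
`x 0 = w 0`, `x (t+1) = x t + u t + w (t+1)`. -/
def stateTraj {Ω : Type*} (w u : ℕ → Ω → ℝ) : ℕ → Ω → ℝ
  | 0 => w 0
  | t + 1 => fun ω => stateTraj w u t ω + u t ω + w (t + 1) ω

/-! Complete the square backwards in time. The coefficients `a t = ε / (T - t + ε)` solve the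
Riccati recursion `a t = ε a (t + 1) / (ε + a (t + 1))` with `a T = 1`, and they satisfy the
completed-square Bellman identity
`ε u² + a (t + 1) (x + u)² = a t x² + (ε + a (t + 1)) (u + x / (T - t + ε))²`.
Because `w (t + 1)` is centred and independent of the non-anticipative `x t + u t`, we have
`E x (t + 1)² = E (x t + u t)² + E w (t + 1)²`. Telescoping, the expected cost of every admissible
control is a noise term that does not depend on the control plus the nonnegative penalties
`(ε + a (t + 1)) E (u t + x t / (T - t + ε))²`, and the feedback `γ*` makes all of them vanish. -/

open Finset
open scoped ENNReal

section

variable {Ω : Type*} {mΩ : MeasurableSpace Ω} {P : Measure Ω} {𝓕 : Filtration ℕ mΩ}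
  {w u : ℕ → Ω → ℝ} {T : ℕ} {ε : ℝ}

lemma stateTraj_eq_of_recursion {x : ℕ → Ω → ℝ} (h0 : x 0 = w 0)
    (hrec : ∀ t, x (t + 1) = fun ω => x t ω + u t ω + w (t + 1) ω) : stateTraj w u = x := by
  funext t
  induction t with
  | zero => exact h0.symm
  | succ t ih => rw [hrec, ← ih]; rfl

lemma measurable_stateTraj (hw : Adapted 𝓕 w)
    (hu : ∀ t < T, Measurable[𝓕 t] (u t)) : ∀ t ≤ T, Measurable[𝓕 t] (stateTraj w u t)
  | 0, _ => hw 0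
  | t + 1, ht =>
    (((measurable_stateTraj hw hu t (by omega)).add (hu t ht)).mono (𝓕.mono t.le_succ)
      le_rfl).add (hw (t + 1))

lemma memLp_stateTraj {p : ℝ≥0∞} (hw : ∀ t, MemLp (w t) p P) (hu : ∀ t < T, MemLp (u t) p P) :
    ∀ t ≤ T, MemLp (stateTraj w u t) p P
  | 0, _ => hw 0
  | t + 1, ht => ((memLp_stateTraj hw hu t (by omega)).add (hu t ht)).add (hw (t + 1))

lemma admissible_of_linear_feedback {p : ℝ≥0∞} {g : ℕ → ℝ}
    (hw : Adapted 𝓕 w) (hw2 : ∀ t, MemLp (w t) p P)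
    (hu : ∀ t, u t = fun ω => -stateTraj w u t ω / g t) (t : ℕ) :
    Measurable[𝓕 t] (u t) ∧ MemLp (u t) p P := by
  induction t using Nat.strong_induction_on with
  | _ t ih =>
    have hx := measurable_stateTraj hw (fun s hs => (ih s hs).1) t le_rfl
    have hx2 := memLp_stateTraj hw2 (fun s hs => (ih s hs).2) t le_rfl
    rw [hu t]
    exact ⟨hx.neg.div_const _, hx2.neg.mul_const (g t)⁻¹⟩

/-- Under the optimal feedback, the cost-to-go from state `x` at time `t` is
`valueCoeff T ε t * x ^ 2` plus noise terms. -/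
noncomputable def valueCoeff (T : ℕ) (ε : ℝ) (t : ℕ) : ℝ := ε / ((T : ℝ) - t + ε)

lemma valueCoeff_self (hε : ε ≠ 0) : valueCoeff T ε T = 1 := by
  simp [valueCoeff, hε]

lemma valueCoeff_pos (hε : 0 < ε) {t : ℕ} (ht : t ≤ T) : 0 < valueCoeff T ε t := by
  have : (t : ℝ) ≤ T := by exact_mod_cast ht
  unfold valueCoeff
  positivity

lemma bellman_completion (hε : 0 < ε) {t : ℕ} (ht : t < T) (x v : ℝ) :
    ε * v ^ 2 + valueCoeff T ε (t + 1) * (x + v) ^ 2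
      = valueCoeff T ε t * x ^ 2
        + (ε + valueCoeff T ε (t + 1)) * (v + x / ((T : ℝ) - t + ε)) ^ 2 := by
  have : (t : ℝ) + 1 ≤ T := by exact_mod_cast ht
  have hb : (T : ℝ) - t + ε ≠ 0 := by linarith
  have hb' : (T : ℝ) - (t + 1) + ε ≠ 0 := by linarith
  simp only [valueCoeff, Nat.cast_succ]
  field_simp
  ring

lemma integral_const_mul_add_const_mul {f g : Ω → ℝ} (hf : Integrable f P) (hg : Integrable g P)
    (c d : ℝ) : ∫ ω, (c * f ω + d * g ω) ∂P = c * ∫ ω, f ω ∂P + d * ∫ ω, g ω ∂P := by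
  rw [integral_add (hf.const_mul c) (hg.const_mul d), integral_const_mul, integral_const_mul]

lemma integral_add_sq_of_indepFun {X W : Ω → ℝ} (hX : MemLp X 2 P) (hW : MemLp W 2 P)
    (hXW : IndepFun X W P) (hW0 : ∫ ω, W ω ∂P = 0) :
    ∫ ω, (X ω + W ω) ^ 2 ∂P = ∫ ω, X ω ^ 2 ∂P + ∫ ω, W ω ^ 2 ∂P := by
  have hcross : ∫ ω, X ω * W ω ∂P = 0 := by
    simpa [hW0] using hXW.integral_mul_eq_mul_integral hX.aestronglyMeasurable
      hW.aestronglyMeasurable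
  have hXW2 : Integrable (fun ω => X ω * W ω) P := hX.integrable_mul hW
  calc ∫ ω, (X ω + W ω) ^ 2 ∂P
      = ∫ ω, (X ω ^ 2 + W ω ^ 2) ∂P + 2 * ∫ ω, X ω * W ω ∂P := by
        rw [← integral_const_mul, ← integral_add (f := fun ω => X ω ^ 2 + W ω ^ 2)
          (hX.integrable_sq.add hW.integrable_sq) (hXW2.const_mul 2)]
        congr 1; ext ω; ring
    _ = ∫ ω, X ω ^ 2 ∂P + ∫ ω, W ω ^ 2 ∂P := by
        rw [integral_add hX.integrable_sq hW.integrable_sq, hcross]; ring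

lemma integral_stage_cost (hε : 0 < ε) (hw : Adapted 𝓕 w) (hw2 : ∀ t, MemLp (w t) 2 P)
    (hu : ∀ t < T, Measurable[𝓕 t] (u t)) (hu2 : ∀ t < T, MemLp (u t) 2 P) {t : ℕ} (ht : t < T)
    (hindep : Indep (MeasurableSpace.comap (w (t + 1)) inferInstance) (𝓕 t) P)
    (hmean : ∫ ω, w (t + 1) ω ∂P = 0) :
    ε * ∫ ω, u t ω ^ 2 ∂P + valueCoeff T ε (t + 1) * ∫ ω, stateTraj w u (t + 1) ω ^ 2 ∂P
      = valueCoeff T ε t * ∫ ω, stateTraj w u t ω ^ 2 ∂P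
        + (ε + valueCoeff T ε (t + 1))
          * ∫ ω, (u t ω + stateTraj w u t ω / ((T : ℝ) - t + ε)) ^ 2 ∂P
        + valueCoeff T ε (t + 1) * ∫ ω, w (t + 1) ω ^ 2 ∂P := by
  set x := stateTraj w u
  have hx2 : MemLp (x t) 2 P := memLp_stateTraj hw2 hu2 t ht.le
  have hxu : Measurable[𝓕 t] (x t + u t) := (measurable_stateTraj hw hu t ht.le).add (hu t ht)
  have hnoise : IndepFun (x t + u t) (w (t + 1)) P := by
    rw [IndepFun_iff_Indep]
    exact indep_of_indep_of_le_left hindep.symm hxu.comap_le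
  have hnext : ∫ ω, x (t + 1) ω ^ 2 ∂P = ∫ ω, (x t ω + u t ω) ^ 2 ∂P + ∫ ω, w (t + 1) ω ^ 2 ∂P :=
    integral_add_sq_of_indepFun (hx2.add (hu2 t ht)) (hw2 (t + 1)) hnoise hmean
  have hq2 : MemLp (fun ω => u t ω + x t ω / ((T : ℝ) - t + ε)) 2 P :=
    (hu2 t ht).add (hx2.mul_const _)
  calc ε * ∫ ω, u t ω ^ 2 ∂P + valueCoeff T ε (t + 1) * ∫ ω, x (t + 1) ω ^ 2 ∂P
      = ∫ ω, (ε * u t ω ^ 2 + valueCoeff T ε (t + 1) * (x t ω + u t ω) ^ 2) ∂P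
          + valueCoeff T ε (t + 1) * ∫ ω, w (t + 1) ω ^ 2 ∂P := by
        rw [hnext, integral_const_mul_add_const_mul (g := fun ω => (x t ω + u t ω) ^ 2)
          (hu2 t ht).integrable_sq (hx2.add (hu2 t ht)).integrable_sq]
        ring
    _ = ∫ ω, (valueCoeff T ε t * x t ω ^ 2
            + (ε + valueCoeff T ε (t + 1)) * (u t ω + x t ω / ((T : ℝ) - t + ε)) ^ 2) ∂P
          + valueCoeff T ε (t + 1) * ∫ ω, w (t + 1) ω ^ 2 ∂P := by
        simp_rw [bellman_completion hε ht]
    _ = _ := by rw [integral_const_mul_add_const_mul hx2.integrable_sq hq2.integrable_sq]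

theorem integral_cost_eq (hε : 0 < ε) (hw : Adapted 𝓕 w) (hw2 : ∀ t, MemLp (w t) 2 P)
    (hindep : ∀ t, Indep (MeasurableSpace.comap (w (t + 1)) inferInstance) (𝓕 t) P)
    (hmean : ∀ t, ∫ ω, w (t + 1) ω ∂P = 0)
    (hu : ∀ t < T, Measurable[𝓕 t] (u t)) (hu2 : ∀ t < T, MemLp (u t) 2 P) :
    ∫ ω, (ε * ∑ t ∈ range T, u t ω ^ 2 + stateTraj w u T ω ^ 2) ∂P
      = ∑ t ∈ range (T + 1), valueCoeff T ε t * ∫ ω, w t ω ^ 2 ∂P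
        + ∑ t ∈ range T, (ε + valueCoeff T ε (t + 1))
          * ∫ ω, (u t ω + stateTraj w u t ω / ((T : ℝ) - t + ε)) ^ 2 ∂P := by
  set x := stateTraj w u
  have hcost : ∫ ω, (ε * ∑ t ∈ range T, u t ω ^ 2 + x T ω ^ 2) ∂P
      = ∑ t ∈ range T, ε * ∫ ω, u t ω ^ 2 ∂P + ∫ ω, x T ω ^ 2 ∂P := by
    have hsq : ∀ t ∈ range T, Integrable (fun ω => u t ω ^ 2) P :=
      fun t ht => (hu2 t (mem_range.mp ht)).integrable_sq
    rw [integral_add ((integrable_finsetSum _ hsq).const_mul ε)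
      (memLp_stateTraj hw2 hu2 T le_rfl).integrable_sq, integral_const_mul,
      integral_finsetSum _ hsq, mul_sum]
  have htelescope := sum_range_sub (fun t => valueCoeff T ε t * ∫ ω, x t ω ^ 2 ∂P) T
  simp only [valueCoeff_self hε.ne', one_mul] at htelescope
  have hstage : ∀ t ∈ range T, ε * ∫ ω, u t ω ^ 2 ∂P
      = (ε + valueCoeff T ε (t + 1)) * ∫ ω, (u t ω + x t ω / ((T : ℝ) - t + ε)) ^ 2 ∂P
        + valueCoeff T ε (t + 1) * ∫ ω, w (t + 1) ω ^ 2 ∂P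
        - (valueCoeff T ε (t + 1) * ∫ ω, x (t + 1) ω ^ 2 ∂P
          - valueCoeff T ε t * ∫ ω, x t ω ^ 2 ∂P) := fun t ht => by
    linarith [integral_stage_cost hε hw hw2 hu hu2 (mem_range.mp ht) (hindep t) (hmean t)]
  rw [hcost, sum_congr rfl hstage, sum_sub_distrib, sum_add_distrib, htelescope,
    sum_range_succ']
  simp only [x, stateTraj]
  ring

lemma natural_eq_iSup_range_comap (hw : ∀ t, StronglyMeasurable (w t)) (t : ℕ) :
    Filtration.natural w hw t
      = ⨆ s ∈ range (t + 1), MeasurableSpace.comap (w s) inferInstance := by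
  simp only [mem_range, Nat.lt_succ_iff]
  rfl

end

theorem optimal_feedback_strategy_general
    {Ω : Type*} [MeasurableSpace Ω] (P : Measure Ω)
    (T : ℕ) (ε : ℝ) (hε : 0 < ε)
    (w : ℕ → Ω → ℝ)
    (hwmeas : ∀ t, Measurable (w t))
    (hindep : iIndepFun w P)
    (hw2 : ∀ t, MemLp (w t) 2 P)
    (hmean : ∀ t, ∫ ω, w t ω ∂P = 0)
    (F : ℕ → MeasurableSpace Ω)
    (hF : ∀ t, F t = ⨆ s ∈ Finset.range (t + 1), MeasurableSpace.comap (w s) inferInstance)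
    (xstar ustar : ℕ → Ω → ℝ)
    (hx0 : xstar 0 = w 0)
    (hustar : ∀ t, ustar t = fun ω => -(xstar t ω) / ((T : ℝ) - t + ε))
    (hxrec : ∀ t, xstar (t + 1) = fun ω => xstar t ω + ustar t ω + w (t + 1) ω) :
    ∀ u : ℕ → Ω → ℝ,
      (∀ t, t < T → Measurable[F t] (u t)) →
      (∀ t, t < T → MemLp (u t) 2 P) →
      ∫ ω, (ε * ∑ t ∈ Finset.range T, (ustar t ω) ^ 2 + (stateTraj w ustar T ω) ^ 2) ∂P
        ≤ ∫ ω, (ε * ∑ t ∈ Finset.range T, (u t ω) ^ 2 + (stateTraj w u T ω) ^ 2) ∂P := by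
  intro u hu hu2
  have hwsm : ∀ t, StronglyMeasurable (w t) := fun t => (hwmeas t).stronglyMeasurable
  obtain rfl : F = Filtration.natural w hwsm :=
    funext fun t => (hF t).trans (natural_eq_iSup_range_comap hwsm t).symm
  have hw : Adapted (Filtration.natural w hwsm) w :=
    (Filtration.stronglyAdapted_natural hwsm).adapted
  have hnoise (t : ℕ) := hindep.indep_comap_natural_of_lt hwsm t.lt_succ_self
  rw [← stateTraj_eq_of_recursion hx0 hxrec] at hustar
  have hstar := admissible_of_linear_feedback hw hw2 hustar
  rw [integral_cost_eq hε hw hw2 hnoise (fun t => hmean (t + 1)) (fun t _ => (hstar t).1)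
      (fun t _ => (hstar t).2), integral_cost_eq hε hw hw2 hnoise (fun t => hmean (t + 1)) hu hu2]
  refine add_le_add_right (le_of_eq_of_le (sum_eq_zero fun t _ => ?_)
    (sum_nonneg fun t ht => ?_)) _
  · simp [hustar t, neg_div]
  · exact mul_nonneg (add_pos hε (valueCoeff_pos hε (mem_range.mp ht))).le
      (integral_nonneg fun _ => sq_nonneg _)

/-- For the finite-horizon stochastic control problem minimizing
`E[ε Σ_{t=0}^{T-1} u_t² + x_T²]` subject to `x_{t+1} = x_t + u_t + w_{t+1}`,
`x_0 = w_0`, with independent square-integrable mean-zero noises, the feedback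
strategy `γ_t*(x) = -x/(T - t + ε)` is optimal among all non-anticipative
square-integrable controls. -/
theorem optimal_feedback_strategy
    {Ω : Type*} [MeasurableSpace Ω] (P : Measure Ω) [IsProbabilityMeasure P]
    (T : ℕ) (hT : 1 ≤ T) (ε : ℝ) (hε : 0 < ε)
    (w : ℕ → Ω → ℝ)
    (hwmeas : ∀ t, Measurable (w t))
    (hindep : iIndepFun w P)
    (hw2 : ∀ t, MemLp (w t) 2 P)
    (hmean : ∀ t, ∫ ω, w t ω ∂P = 0)
    (F : ℕ → MeasurableSpace Ω)
    (hF : ∀ t, F t = ⨆ s ∈ Finset.range (t + 1), MeasurableSpace.comap (w s) inferInstance)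
    (xstar ustar : ℕ → Ω → ℝ)
    (hx0 : xstar 0 = w 0)
    (hustar : ∀ t, ustar t = fun ω => -(xstar t ω) / ((T : ℝ) - t + ε))
    (hxrec : ∀ t, xstar (t + 1) = fun ω => xstar t ω + ustar t ω + w (t + 1) ω) :
    ∀ u : ℕ → Ω → ℝ,
      (∀ t, t < T → Measurable[F t] (u t)) →
      (∀ t, t < T → MemLp (u t) 2 P) →
      ∫ ω, (ε * ∑ t ∈ Finset.range T, (ustar t ω) ^ 2 + (stateTraj w ustar T ω) ^ 2) ∂P
        ≤ ∫ ω, (ε * ∑ t ∈ Finset.range T, (u t ω) ^ 2 + (stateTraj w u T ω) ^ 2) ∂P :=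
  optimal_feedback_strategy_general P T ε hε w hwmeas hindep hw2 hmean F hF xstar ustar hx0 hustar
    hxrec
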